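/- arXiv:2509.09256 — 3 statements merged into one kernel-verified Lean document; each statement's English description precedes it below -/
import Mathlib

section
/- (Partial nonlinear right eigenvalue assignment) Let f : ℝ^n → ℝ^n, g : ℝ^n → ℝ^{n×m}, k : ℝ^n → ℝ^m, l : ℝ^ν → ℝ^m, s : ℝ^ν → ℝ^ν be C¹; let λ : ℝ^ν → ℂ be C⁰ and v : ℝ^ν → ℂ^ν be C¹ with [v(w), s(w)] = λ(w) v(w) on ℝ^ν. Suppose π : ℝ^ν → ℝ^n is C² and satisfies f(π(w)) + g(π(w)) l(w) = (∂π/∂w)(w) s(w) and k(π(w)) = l(w) on ℝ^ν. Suppose λ̃ : ℝ^n → ℂ (C⁰) and ṽ : ℝ^n → ℂ^n (C¹) satisfy λ̃(π(w)) = λ(w) and ṽ(π(w)) = (∂π/∂w)(w) v(w) with ṽ(π(w)) ≠ 0 for all w. Then, with f̃(x) := f(x) + g(x) k(x), the Lie bracket identity [ṽ(x), f̃(x)] = λ̃(x) ṽ(x) holds at every x = π(w), w ∈ ℝ^ν. -/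
open Matrix

/-- Jacobian matrix of a real vector-valued map. -/
noncomputable def jacR {n m : ℕ} (f : (Fin n → ℝ) → (Fin m → ℝ)) (x : Fin n → ℝ) :
    Matrix (Fin m) (Fin n) ℝ :=
  fun i j => fderiv ℝ (fun y => f y i) x (Pi.single j 1)

/-- Jacobian matrix of a complex vector-valued map of a real variable. -/
noncomputable def jacC {n m : ℕ} (f : (Fin n → ℝ) → (Fin m → ℂ)) (x : Fin n → ℝ) :
    Matrix (Fin m) (Fin n) ℂ :=
  fun i j => fderiv ℝ (fun y => f y i) x (Pi.single j 1)

/-- Lie bracket of a complex vector field `v` and a real vector field `s`. -/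
noncomputable def lieBkt {n : ℕ} (v : (Fin n → ℝ) → (Fin n → ℂ))
    (s : (Fin n → ℝ) → (Fin n → ℝ)) (x : Fin n → ℝ) : Fin n → ℂ :=
  ((jacR s x).map (Complex.ofReal ·)).mulVec (v x)
    - (jacC v x).mulVec (fun i => (s x i : ℂ))

/-! The Lie bracket is natural for `π`-related vector fields: if `F ∘ π = Dπ · s` and
`ṽ ∘ π = Dπ · v`, differentiating both relations along `π` gives `[ṽ, F] ∘ π = Dπ · [v, s]`,
the second derivatives of `π` cancelling by symmetry of the Hessian. The invariance equation
together with `k ∘ π = l` makes the closed loop `f + g k` `π`-related to `s`, so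
`[ṽ, f + g k](π w) = Dπ(w) (λ(w) v(w)) = λ̃(π w) ṽ(π w)`. -/

section

variable {n m ν : ℕ}

lemma fderiv_ofReal_apply {E : Type*} [NormedAddCommGroup E] [NormedSpace ℝ E] {c : E → ℝ}
    {x : E} (hc : DifferentiableAt ℝ c x) (u : E) :
    fderiv ℝ (fun y => (c y : ℂ)) x u = fderiv ℝ c x u :=
  congrArg (· u) (Complex.ofRealCLM.hasFDerivAt.comp x hc.hasFDerivAt).fderiv

lemma jacC_ofReal {F : (Fin n → ℝ) → (Fin m → ℝ)} {x : Fin n → ℝ}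
    (hF : DifferentiableAt ℝ F x) :
    jacC (fun y i => (F y i : ℂ)) x = (jacR F x).map Complex.ofReal := by
  ext i j
  exact fderiv_ofReal_apply (differentiableAt_pi.1 hF i) _

lemma jacC_comp {φ : (Fin n → ℝ) → (Fin m → ℂ)} {p : (Fin ν → ℝ) → (Fin n → ℝ)}
    {w : Fin ν → ℝ} (hφ : DifferentiableAt ℝ φ (p w)) (hp : DifferentiableAt ℝ p w) :
    jacC (φ ∘ p) w = jacC φ (p w) * (jacR p w).map Complex.ofReal := by
  refine Matrix.ext fun i a => ?_
  have hφi : DifferentiableAt ℝ (fun x => φ x i) (p w) := differentiableAt_pi.1 hφ i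
  have hcol : fderiv ℝ p w (Pi.single a 1)
      = ∑ j, jacR p w j a • (Pi.single j 1 : Fin n → ℝ) := by
    ext j
    simp [jacR, fderiv_apply hp, Pi.single_apply]
  simp only [jacC, Matrix.mul_apply, Matrix.map_apply]
  rw [show (fun y => (φ ∘ p) y i) = (fun x => φ x i) ∘ p from rfl,
    fderiv_comp w hφi hp, ContinuousLinearMap.comp_apply, hcol]
  simp [jacR, mul_comm]

lemma jacC_fun_mulVec_mulVec {M : (Fin ν → ℝ) → Matrix (Fin n) (Fin ν) ℂ}
    {u : (Fin ν → ℝ) → (Fin ν → ℂ)} {w : Fin ν → ℝ}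
    (hM : ∀ i b, DifferentiableAt ℝ (fun y => M y i b) w) (hu : DifferentiableAt ℝ u w)
    (z : Fin ν → ℂ) :
    jacC (fun y => M y *ᵥ u y) w *ᵥ z
      = (fun i => ∑ a, ∑ b, fderiv ℝ (fun y => M y i b) w (Pi.single a 1) * z a * u w b)
        + M w *ᵥ (jacC u w *ᵥ z) := by
  ext i
  have hub : ∀ b, DifferentiableAt ℝ (fun y => u y b) w := differentiableAt_pi.1 hu
  simp only [jacC, Matrix.mulVec, dotProduct, Pi.add_apply]
  simp_rw [fderiv_fun_sum (fun b _ => (hM i b).fun_mul (hub b)),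
    _root_.sum_apply, fderiv_fun_mul (hM i _) (hub _)]
  simp only [_root_.add_apply, _root_.smul_apply, smul_eq_mul,
    add_mul, Finset.sum_add_distrib, Finset.mul_sum, Finset.sum_mul]
  rw [Finset.sum_comm (f := fun a b => M w i b * _ * z a), add_comm]
  congr 1
  · exact Finset.sum_congr rfl fun a _ => Finset.sum_congr rfl fun b _ => by ring
  · exact Finset.sum_congr rfl fun a _ => Finset.sum_congr rfl fun b _ => by ring

lemma differentiableAt_jacR_apply {p : (Fin ν → ℝ) → (Fin n → ℝ)} {w : Fin ν → ℝ}
    (hp : ContDiffAt ℝ 2 p w) (i : Fin n) (b : Fin ν) :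
    DifferentiableAt ℝ (fun y => jacR p y i b) w :=
  ((((contDiffAt_pi.1 hp i).fderiv_right (m := 1) le_rfl).differentiableAt
    one_ne_zero).clm_apply (differentiableAt_const _))

lemma fderiv_jacR_comm {p : (Fin ν → ℝ) → (Fin n → ℝ)} {w : Fin ν → ℝ}
    (hp : ContDiffAt ℝ 2 p w) (i : Fin n) (a b : Fin ν) :
    fderiv ℝ (fun y => jacR p y i b) w (Pi.single a 1)
      = fderiv ℝ (fun y => jacR p y i a) w (Pi.single b 1) := by
  have hpi : ContDiffAt ℝ 2 (fun y => p y i) w := contDiffAt_pi.1 hp i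
  have hd : DifferentiableAt ℝ (fderiv ℝ fun y => p y i) w :=
    (hpi.fderiv_right (m := 1) le_rfl).differentiableAt one_ne_zero
  have happly : ∀ u : Fin ν → ℝ, fderiv ℝ (fun y => fderiv ℝ (fun y => p y i) y u) w
      = (fderiv ℝ (fderiv ℝ fun y => p y i) w).flip u := fun u => by
    simpa using fderiv_clm_apply hd (differentiableAt_const u)
  simp only [jacR]
  rw [happly, happly]
  exact hpi.isSymmSndFDerivAt (by simp) _ _

theorem lieBkt_comp_eq_mulVec {p : (Fin ν → ℝ) → (Fin n → ℝ)} {F : (Fin n → ℝ) → (Fin n → ℝ)}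
    {V : (Fin n → ℝ) → (Fin n → ℂ)} {s : (Fin ν → ℝ) → (Fin ν → ℝ)}
    {v : (Fin ν → ℝ) → (Fin ν → ℂ)} {w : Fin ν → ℝ}
    (hp : ContDiffAt ℝ 2 p w) (hF : DifferentiableAt ℝ F (p w))
    (hV : DifferentiableAt ℝ V (p w)) (hs : DifferentiableAt ℝ s w)
    (hv : DifferentiableAt ℝ v w)
    (hFs : ∀ y, F (p y) = jacR p y *ᵥ s y)
    (hVv : ∀ y, V (p y) = (jacR p y).map Complex.ofReal *ᵥ v y) :
    lieBkt V F (p w) = (jacR p w).map Complex.ofReal *ᵥ lieBkt v s w := by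
  set P : (Fin ν → ℝ) → Matrix (Fin n) (Fin ν) ℂ := fun y => (jacR p y).map Complex.ofReal
  set sC : (Fin ν → ℝ) → (Fin ν → ℂ) := fun y i => (s y i : ℂ)
  have hFsC : (fun y i => (F y i : ℂ)) ∘ p = fun y => P y *ᵥ sC y := by
    funext y i
    simp only [Function.comp_apply, hFs, P, sC]
    exact RingHom.map_mulVec Complex.ofRealHom _ _ i
  have hP : ∀ i b, DifferentiableAt ℝ (fun y => P y i b) w := fun i b =>
    Complex.ofRealCLM.differentiableAt.comp w (differentiableAt_jacR_apply hp i b)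
  have hsC : DifferentiableAt ℝ sC w := differentiableAt_pi.2 fun i =>
    Complex.ofRealCLM.differentiableAt.comp w (differentiableAt_pi.1 hs i)
  have hFC : DifferentiableAt ℝ (fun y i => (F y i : ℂ)) (p w) := differentiableAt_pi.2 fun i =>
    Complex.ofRealCLM.differentiableAt.comp (p w) (differentiableAt_pi.1 hF i)
  have hsym : ∀ z y : Fin ν → ℂ,
      (fun i => ∑ a, ∑ b, fderiv ℝ (fun x => P x i b) w (Pi.single a 1) * z a * y b)
        = fun i => ∑ a, ∑ b, fderiv ℝ (fun x => P x i b) w (Pi.single a 1) * y a * z b := by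
    intro z y
    funext i
    rw [Finset.sum_comm]
    refine Finset.sum_congr rfl fun a _ => Finset.sum_congr rfl fun b _ => ?_
    simp only [P, Matrix.map_apply, fderiv_ofReal_apply (differentiableAt_jacR_apply hp i _),
      fderiv_jacR_comm hp i a b]
    ring
  calc lieBkt V F (p w)
      = jacC (fun y i => (F y i : ℂ)) (p w) *ᵥ (P w *ᵥ v w) - jacC V (p w) *ᵥ (P w *ᵥ sC w) := by
        rw [lieBkt, jacC_ofReal hF, hVv w, ← congrFun hFsC w]
        rfl
    _ = jacC ((fun y i => (F y i : ℂ)) ∘ p) w *ᵥ v w - jacC (V ∘ p) w *ᵥ sC w := by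
        rw [jacC_comp hFC (hp.differentiableAt two_ne_zero),
          jacC_comp hV (hp.differentiableAt two_ne_zero), mulVec_mulVec, mulVec_mulVec]
    _ = jacC (fun y => P y *ᵥ sC y) w *ᵥ v w - jacC (fun y => P y *ᵥ v y) w *ᵥ sC w := by
        rw [hFsC, show V ∘ p = fun y => P y *ᵥ v y from funext hVv]
    _ = P w *ᵥ lieBkt v s w := by
        rw [jacC_fun_mulVec_mulVec hP hsC, jacC_fun_mulVec_mulVec hP hv, hsym, lieBkt,
          jacC_ofReal hs, mulVec_sub]
        abel

end

theorem stmt_10_general (n m ν : ℕ)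
    (f : (Fin n → ℝ) → (Fin n → ℝ)) (g : (Fin n → ℝ) → Matrix (Fin n) (Fin m) ℝ)
    (k : (Fin n → ℝ) → (Fin m → ℝ)) (l : (Fin ν → ℝ) → (Fin m → ℝ))
    (s : (Fin ν → ℝ) → (Fin ν → ℝ)) (p : (Fin ν → ℝ) → (Fin n → ℝ))
    (lam : (Fin ν → ℝ) → ℂ) (v : (Fin ν → ℝ) → (Fin ν → ℂ))
    (tlam : (Fin n → ℝ) → ℂ) (tv : (Fin n → ℝ) → (Fin n → ℂ))
    (hf : ContDiff ℝ 1 f) (hg : ∀ i j, ContDiff ℝ 1 fun x => g x i j)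
    (hk : ContDiff ℝ 1 k) (hs : ContDiff ℝ 1 s)
    (hp : ContDiff ℝ 2 p)
    (hv : ContDiff ℝ 1 v)
    (htv : ContDiff ℝ 1 tv)
    (heig : ∀ w, lieBkt v s w = lam w • v w)
    (hsyl : ∀ w, f (p w) + (g (p w)).mulVec (l w) = (jacR p w).mulVec (s w))
    (hmatch : ∀ w, k (p w) = l w)
    (htlam_eq : ∀ w, tlam (p w) = lam w)
    (htv_eq : ∀ w, tv (p w) = ((jacR p w).map (Complex.ofReal ·)).mulVec (v w)) :
    ∀ w, lieBkt tv (fun x => f x + (g x).mulVec (k x)) (p w)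
      = tlam (p w) • tv (p w) := by
  intro w
  have hclosed : Differentiable ℝ fun x => f x + (g x).mulVec (k x) := by
    refine (hf.differentiable one_ne_zero).add (differentiable_pi.2 fun i => ?_)
    simp only [Matrix.mulVec, dotProduct]
    exact Differentiable.fun_sum fun j _ =>
      ((hg i j).differentiable one_ne_zero).mul ((contDiff_pi.1 hk j).differentiable one_ne_zero)
  have hrelated : ∀ y, f (p y) + (g (p y)).mulVec (k (p y)) = (jacR p y).mulVec (s y) :=
    fun y => hmatch y ▸ hsyl y
  rw [lieBkt_comp_eq_mulVec hp.contDiffAt (hclosed _) (htv.differentiable one_ne_zero _)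
    (hs.differentiable one_ne_zero w) (hv.differentiable one_ne_zero w) hrelated htv_eq,
    heig, Matrix.mulVec_smul, ← htv_eq, htlam_eq]

/-- partial nonlinear right eigenvalue assignment (Theorem 1 of the paper).
On the image of `π`, `(λ̃, ṽ)` is a nonlinear right eigenpair of the closed loop
`f̃ = f + g·k`. -/
theorem stmt_10 (n m ν : ℕ)
    (f : (Fin n → ℝ) → (Fin n → ℝ)) (g : (Fin n → ℝ) → Matrix (Fin n) (Fin m) ℝ)
    (k : (Fin n → ℝ) → (Fin m → ℝ)) (l : (Fin ν → ℝ) → (Fin m → ℝ))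
    (s : (Fin ν → ℝ) → (Fin ν → ℝ)) (p : (Fin ν → ℝ) → (Fin n → ℝ))
    (lam : (Fin ν → ℝ) → ℂ) (v : (Fin ν → ℝ) → (Fin ν → ℂ))
    (tlam : (Fin n → ℝ) → ℂ) (tv : (Fin n → ℝ) → (Fin n → ℂ))
    (hf : ContDiff ℝ 1 f) (hg : ∀ i j, ContDiff ℝ 1 fun x => g x i j)
    (hk : ContDiff ℝ 1 k) (hl : ContDiff ℝ 1 l) (hs : ContDiff ℝ 1 s)
    (hp : ContDiff ℝ 2 p)
    (hlam : Continuous lam) (hv : ContDiff ℝ 1 v)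
    (htlam : Continuous tlam) (htv : ContDiff ℝ 1 tv)
    (heig : ∀ w, lieBkt v s w = lam w • v w)
    (hsyl : ∀ w, f (p w) + (g (p w)).mulVec (l w) = (jacR p w).mulVec (s w))
    (hmatch : ∀ w, k (p w) = l w)
    (htlam_eq : ∀ w, tlam (p w) = lam w)
    (htv_eq : ∀ w, tv (p w) = ((jacR p w).map (Complex.ofReal ·)).mulVec (v w))
    (htv_ne : ∀ w, tv (p w) ≠ 0) :
    ∀ w, lieBkt tv (fun x => f x + (g x).mulVec (k x)) (p w)
      = tlam (p w) • tv (p w) :=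
  stmt_10_general n m ν f g k l s p lam v tlam tv hf hg hk hs hp hv htv heig hsyl hmatch htlam_eq
    htv_eq
end

section
/- (Partial nonlinear left eigenvalue assignment) Let F̃ : ℝ^N → ℝ^N and ρ : ℝ^N → ℝ^ν be C² with −s(−ρ(z)) = (∂ρ/∂z)(z) F̃(z) on ℝ^N for some C¹ map s : ℝ^ν → ℝ^ν. Let λ : ℝ^ν → ℂ (C⁰) and v : ℝ^ν → ℂ^ν (C¹) satisfy the left eigenvalue equation vᵀ(w)(∂s/∂w)(w) + ((∂v/∂w)(w) s(w))ᵀ = λ(w) vᵀ(w) on ℝ^ν. Define λ̃(z) := λ(−ρ(z)) and ṽᵀ(z) := −vᵀ(−ρ(z)) (∂ρ/∂z)(z), and assume ṽ is nowhere zero. Then ṽᵀ(z)(∂F̃/∂z)(z) + ((∂ṽ/∂z)(z) F̃(z))ᵀ = λ̃(z) ṽᵀ(z) on ℝ^N. -/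
open Matrix

/-- Left-hand side of the nonlinear left eigenvalue equation
`vᵀ(∂s/∂z) + ((∂v/∂z)s)ᵀ`, viewed as a vector. -/
noncomputable def leftSide {N : ℕ} (v : (Fin N → ℝ) → (Fin N → ℂ))
    (s : (Fin N → ℝ) → (Fin N → ℝ)) (z : Fin N → ℝ) : Fin N → ℂ :=
  Matrix.vecMul (v z) ((jacR s z).map (Complex.ofReal ·))
    + (jacC v z).mulVec (fun i => (s z i : ℂ))

/-!
Write `W = -ρ`. The row field `ṽ` is the pullback `W^*α` of the `1`-form `α = vᵀ dw`, and the
operator `vᵀ (∂s/∂w) + ((∂v/∂w) s)ᵀ` is the Lie derivative `L_s α`. The hypothesis on `ρ` says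
that `F̃` and `s` are `W`-related, `s ∘ W = DW · F̃`, and Lie derivatives of `1`-forms commute with
pullback along related vector fields: `L_F̃ (W^*α) = W^*(L_s α)`. The eigen-equation `L_s α = λ α`
then gives `L_F̃ ṽ = (λ ∘ W) ṽ`. The commutation is the chain rule applied to `s ∘ W = DW · F̃`
together with the symmetry of `D²W`.
-/

section LieDerivative

variable {E F G : Type*} [NormedAddCommGroup E] [NormedSpace ℝ E]
  [NormedAddCommGroup F] [NormedSpace ℝ F] [NormedAddCommGroup G] [NormedSpace ℝ G]

noncomputable def lieDerivForm (s : F → F) (α : F → F →L[ℝ] G) (w : F) : F →L[ℝ] G :=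
  (α w).comp (fderiv ℝ s w) + fderiv ℝ α w (s w)

noncomputable def pullbackForm (W : E → F) (α : F → F →L[ℝ] G) (y : E) : E →L[ℝ] G :=
  (α (W y)).comp (fderiv ℝ W y)

theorem lieDerivForm_pullbackForm {W : E → F} {X : E → E} {s : F → F} {α : F → F →L[ℝ] G}
    {z : E} (hW : Differentiable ℝ W) (hW' : DifferentiableAt ℝ (fderiv ℝ W) z)
    (hX : DifferentiableAt ℝ X z) (hs : DifferentiableAt ℝ s (W z))
    (hα : DifferentiableAt ℝ α (W z)) (hrel : ∀ y, s (W y) = fderiv ℝ W y (X y)) :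
    lieDerivForm X (pullbackForm W α) z = (lieDerivForm s α (W z)).comp (fderiv ℝ W z) := by
  have hrel_deriv : (fderiv ℝ s (W z)).comp (fderiv ℝ W z)
      = (fderiv ℝ W z).comp (fderiv ℝ X z) + (fderiv ℝ (fderiv ℝ W) z).flip (X z) := by
    rw [← fderiv_comp z hs (hW z), show s ∘ W = fun y => fderiv ℝ W y (X y) from funext hrel,
      fderiv_clm_apply hW' hX]
  have hsymm : ∀ u, fderiv ℝ (fderiv ℝ W) z u (X z) = fderiv ℝ (fderiv ℝ W) z (X z) u :=
    fun u => second_derivative_symmetric (fun y => (hW y).hasFDerivAt) hW'.hasFDerivAt u (X z)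
  have hpull : HasFDerivAt (pullbackForm W α) _ z :=
    (hα.hasFDerivAt.comp z (hW z).hasFDerivAt).clm_comp hW'.hasFDerivAt
  ext u
  have h := congrArg (α (W z)) (DFunLike.congr_fun hrel_deriv u)
  simp only [ContinuousLinearMap.comp_apply, _root_.add_apply,
    ContinuousLinearMap.flip_apply, map_add] at h
  simp only [lieDerivForm, pullbackForm, hpull.fderiv, ContinuousLinearMap.comp_apply,
    _root_.add_apply, ContinuousLinearMap.compL_apply,
    ContinuousLinearMap.flip_apply, Function.comp_apply, hsymm, ← hrel z, h]
  abel

end LieDerivative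

section Coordinates

noncomputable def rowForm (n : ℕ) : (Fin n → ℂ) ≃L[ℝ] (Fin n → ℝ) →L[ℝ] ℂ :=
  ((LinearEquiv.piRing ℝ ℂ (Fin n) ℝ).symm.trans
    LinearMap.toContinuousLinearMap).toContinuousLinearEquiv

variable {n m : ℕ}

theorem rowForm_apply (x : Fin n → ℂ) (u : Fin n → ℝ) : rowForm n x u = ∑ i, u i • x i := by
  simp [rowForm]

theorem rowForm_symm_apply (L : (Fin n → ℝ) →L[ℝ] ℂ) (j : Fin n) :
    (rowForm n).symm L j = L (Pi.single j 1) := rfl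

theorem ContinuousLinearMap.sum_smul_apply_single {M : Type*} [AddCommGroup M] [Module ℝ M]
    [TopologicalSpace M] (L : (Fin n → ℝ) →L[ℝ] M) (u : Fin n → ℝ) :
    ∑ j, u j • L (Pi.single j 1) = L u := by
  conv_rhs => rw [pi_eq_sum_univ' u]
  simp [map_sum]

theorem jacR_mulVec {f : (Fin n → ℝ) → Fin m → ℝ} {z : Fin n → ℝ}
    (hf : DifferentiableAt ℝ f z) (u : Fin n → ℝ) : jacR f z *ᵥ u = fderiv ℝ f z u := by
  ext i
  simp only [mulVec, dotProduct, jacR, fderiv_apply hf, mul_comm, ← smul_eq_mul]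
  exact (ContinuousLinearMap.proj i ∘L fderiv ℝ f z).sum_smul_apply_single u

theorem jacC_mulVec {f : (Fin n → ℝ) → Fin m → ℂ} {z : Fin n → ℝ}
    (hf : DifferentiableAt ℝ f z) (u : Fin n → ℝ) :
    jacC f z *ᵥ (fun j => (u j : ℂ)) = fderiv ℝ f z u := by
  ext i
  simp only [mulVec, dotProduct, jacC, fderiv_apply hf]
  simp_rw [mul_comm _ ((u _ : ℂ)), ← Complex.real_smul]
  exact (ContinuousLinearMap.proj i ∘L fderiv ℝ f z).sum_smul_apply_single u

theorem rowForm_vecMul_jacR {f : (Fin n → ℝ) → Fin m → ℝ} {z : Fin n → ℝ}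
    (hf : DifferentiableAt ℝ f z) (x : Fin m → ℂ) :
    rowForm n (vecMul x ((jacR f z).map (Complex.ofReal ·)))
      = (rowForm m x).comp (fderiv ℝ f z) := by
  rw [← ContinuousLinearEquiv.eq_symm_apply]
  ext j
  simp only [vecMul, dotProduct, map_apply, jacR, fderiv_apply hf, ContinuousLinearMap.comp_apply,
    ContinuousLinearMap.proj_apply, rowForm_symm_apply, rowForm_apply, Complex.real_smul]
  exact Finset.sum_congr rfl fun _ _ => mul_comm _ _

theorem rowForm_smul (c : ℂ) (x : Fin n → ℂ) : rowForm n (c • x) = c • rowForm n x := by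
  ext u
  simp only [rowForm_apply, _root_.smul_apply, Pi.smul_apply, Finset.smul_sum]
  exact Finset.sum_congr rfl fun _ _ => smul_comm _ _ _

theorem rowForm_leftSide {v : (Fin n → ℝ) → Fin n → ℂ} {s : (Fin n → ℝ) → Fin n → ℝ}
    {w : Fin n → ℝ} (hv : DifferentiableAt ℝ v w) (hs : DifferentiableAt ℝ s w) :
    rowForm n (leftSide v s w) = lieDerivForm s (fun y => rowForm n (v y)) w := by
  rw [leftSide, map_add, rowForm_vecMul_jacR hs, jacC_mulVec hv, lieDerivForm,
    show (fun y => rowForm n (v y)) = rowForm n ∘ v from rfl, ContinuousLinearEquiv.comp_fderiv]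
  rfl

theorem leftSide_eq_smul_of_pullback {N ν : ℕ} {W : (Fin N → ℝ) → Fin ν → ℝ}
    {X : (Fin N → ℝ) → Fin N → ℝ} {s : (Fin ν → ℝ) → Fin ν → ℝ} {v : (Fin ν → ℝ) → Fin ν → ℂ}
    {tv : (Fin N → ℝ) → Fin N → ℂ} {lam : (Fin ν → ℝ) → ℂ} {z : Fin N → ℝ}
    (hW : Differentiable ℝ W) (hW' : DifferentiableAt ℝ (fderiv ℝ W) z)
    (hX : DifferentiableAt ℝ X z) (hs : Differentiable ℝ s) (hv : Differentiable ℝ v)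
    (hrel : ∀ y, s (W y) = fderiv ℝ W y (X y))
    (heig : ∀ w, leftSide v s w = lam w • v w)
    (htv : ∀ y, rowForm N (tv y) = pullbackForm W (fun w => rowForm ν (v w)) y) :
    leftSide tv X z = lam (W z) • tv z := by
  have hα : Differentiable ℝ fun w => rowForm ν (v w) := (rowForm ν).differentiable.comp hv
  have htv_diff : DifferentiableAt ℝ tv z := by
    rw [← (rowForm N).comp_differentiableAt_iff, show rowForm N ∘ tv = _ from funext htv]
    exact ((hα _).comp z (hW z)).clm_comp hW'
  apply (rowForm N).injective
  calc rowForm N (leftSide tv X z)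
      = lieDerivForm X (pullbackForm W fun w => rowForm ν (v w)) z := by
        rw [rowForm_leftSide htv_diff hX, ← funext htv]
    _ = (rowForm ν (leftSide v s (W z))).comp (fderiv ℝ W z) := by
        rw [lieDerivForm_pullbackForm hW hW' hX (hs _) (hα _) hrel,
          rowForm_leftSide (hv _) (hs _)]
    _ = rowForm N (lam (W z) • tv z) := by
        rw [heig, rowForm_smul, ContinuousLinearMap.smul_comp, rowForm_smul, htv, pullbackForm]

end Coordinates

theorem stmt_12_general (N ν : ℕ)
    (Ft : (Fin N → ℝ) → (Fin N → ℝ)) (ρ : (Fin N → ℝ) → (Fin ν → ℝ))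
    (s : (Fin ν → ℝ) → (Fin ν → ℝ))
    (lam : (Fin ν → ℝ) → ℂ) (v : (Fin ν → ℝ) → (Fin ν → ℂ))
    (tlam : (Fin N → ℝ) → ℂ) (tv : (Fin N → ℝ) → (Fin N → ℂ))
    (hFt : ContDiff ℝ 2 Ft) (hρ : ContDiff ℝ 2 ρ) (hs : ContDiff ℝ 1 s)
    (hv : ContDiff ℝ 1 v)
    (himm : ∀ z, -s (-(ρ z)) = (jacR ρ z).mulVec (Ft z))
    (heig : ∀ w, Matrix.vecMul (v w) ((jacR s w).map (Complex.ofReal ·))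
        + (jacC v w).mulVec (fun i => (s w i : ℂ)) = lam w • v w)
    (htlam : ∀ z, tlam z = lam (-(ρ z)))
    (htv : ∀ z, tv z = -(Matrix.vecMul (v (-(ρ z))) ((jacR ρ z).map (Complex.ofReal ·)))) :
    ∀ z, leftSide tv Ft z = tlam z • tv z := by
  intro z
  have hρd : Differentiable ℝ ρ := hρ.differentiable two_ne_zero
  have hD2W : Differentiable ℝ (fderiv ℝ (-ρ)) :=
    (hρ.neg.fderiv_right (m := 1) le_rfl).differentiable one_ne_zero
  have hrel : ∀ y, s ((-ρ) y) = fderiv ℝ (-ρ) y (Ft y) := fun y => by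
    rw [fderiv_neg, _root_.neg_apply, ← jacR_mulVec (hρd y), ← himm y, Pi.neg_apply, neg_neg]
  rw [htlam]
  refine leftSide_eq_smul_of_pullback hρd.neg (hD2W z) (hFt.differentiable two_ne_zero z)
    (hs.differentiable one_ne_zero) (hv.differentiable one_ne_zero) hrel heig fun y => ?_
  rw [htv y, map_neg, rowForm_vecMul_jacR (hρd y), pullbackForm, fderiv_neg,
    ContinuousLinearMap.comp_neg, Pi.neg_apply]

/-- partial nonlinear left eigenvalue assignment (Theorem 3 of the paper):
`(λ̃, ṽ)` with `λ̃(z) = λ(−ρ(z))` and `ṽᵀ(z) = −vᵀ(−ρ(z))(∂ρ/∂z)(z)` is a nonlinear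
left eigenpair of `ż = F̃(z)`. -/
theorem stmt_12 (N ν : ℕ)
    (Ft : (Fin N → ℝ) → (Fin N → ℝ)) (ρ : (Fin N → ℝ) → (Fin ν → ℝ))
    (s : (Fin ν → ℝ) → (Fin ν → ℝ))
    (lam : (Fin ν → ℝ) → ℂ) (v : (Fin ν → ℝ) → (Fin ν → ℂ))
    (tlam : (Fin N → ℝ) → ℂ) (tv : (Fin N → ℝ) → (Fin N → ℂ))
    (hFt : ContDiff ℝ 2 Ft) (hρ : ContDiff ℝ 2 ρ) (hs : ContDiff ℝ 1 s)
    (hlam : Continuous lam) (hv : ContDiff ℝ 1 v)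
    (himm : ∀ z, -s (-(ρ z)) = (jacR ρ z).mulVec (Ft z))
    (heig : ∀ w, Matrix.vecMul (v w) ((jacR s w).map (Complex.ofReal ·))
        + (jacC v w).mulVec (fun i => (s w i : ℂ)) = lam w • v w)
    (htlam : ∀ z, tlam z = lam (-(ρ z)))
    (htv : ∀ z, tv z = -(Matrix.vecMul (v (-(ρ z))) ((jacR ρ z).map (Complex.ofReal ·))))
    (htv_ne : ∀ z, tv z ≠ 0) :
    ∀ z, leftSide tv Ft z = tlam z • tv z :=
  stmt_12_general N ν Ft ρ s lam v tlam tv hFt hρ hs hv himm heig htlam htv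
end

section
/- For the closed-loop vector field f̃(x₁,x₂) = (−x₁ − x₁²/2 + x₁x₂ − x₂² + φ(x₂ − x₁), −x₂ − x₂²/2 + φ(x₂ − x₁)), where φ : ℝ → ℝ is any C¹ function with φ(0) = 0, the pair λ(x) = −1 − x₂ with constant eigenvector v = (1,1) is a nonlinear right eigenpair on ℝ²: (∂f̃/∂x)(x) v = λ(x) v for all x ∈ ℝ². -/
/-!
`J(x) v` is the derivative of `t ↦ f̃(x + t v)` at `t = 0`. Along the diagonal direction
`v = (1,1)` the argument `x₂ − x₁` of `φ` is constant, and the closed-loop field moves along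
`v` itself: `f̃(x + t v) = f̃(x) + ((−1 − x₂) t − t²/2) v`. Differentiating at `t = 0` gives
`J(x) v = (−1 − x₂) v`.
-/

open Matrix

theorem jacR_mulVec_apply {n m : ℕ} (f : (Fin n → ℝ) → (Fin m → ℝ)) (x v : Fin n → ℝ)
    (i : Fin m) : (jacR f x *ᵥ v) i = fderiv ℝ (fun y => f y i) x v := by
  conv_rhs => rw [pi_eq_sum_univ' v]
  simp [mulVec, dotProduct, jacR, mul_comm]

theorem jacR_mulVec_apply_eq_deriv_line {n m : ℕ} {f : (Fin n → ℝ) → (Fin m → ℝ)}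
    {x : Fin n → ℝ} {i : Fin m} (hf : DifferentiableAt ℝ (fun y => f y i) x) (v : Fin n → ℝ) :
    (jacR f x *ᵥ v) i = deriv (fun t : ℝ => f (x + t • v) i) 0 := by
  rw [jacR_mulVec_apply, ← hf.lineDeriv_eq_fderiv, lineDeriv]

theorem jacR_mulVec_eq_smul_of_add_smul {n m : ℕ} {f : (Fin n → ℝ) → (Fin m → ℝ)}
    {x v : Fin n → ℝ} {w : Fin m → ℝ} {g : ℝ → ℝ} {μ : ℝ}
    (hf : ∀ i, DifferentiableAt ℝ (fun y => f y i) x)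
    (hline : ∀ t : ℝ, f (x + t • v) = f x + g t • w) (hg : HasDerivAt g μ 0) :
    jacR f x *ᵥ v = μ • w := by
  funext i
  rw [jacR_mulVec_apply_eq_deriv_line (hf i)]
  simp only [hline, Pi.add_apply, Pi.smul_apply, smul_eq_mul]
  exact ((hg.mul_const (w i)).const_add (f x i)).deriv

noncomputable def closedLoopField (φ : ℝ → ℝ) (x : Fin 2 → ℝ) : Fin 2 → ℝ :=
  ![-x 0 - (x 0) ^ 2 / 2 + x 0 * x 1 - (x 1) ^ 2 + φ (x 1 - x 0),
    -x 1 - (x 1) ^ 2 / 2 + φ (x 1 - x 0)]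

theorem differentiableAt_closedLoopField_apply {φ : ℝ → ℝ} (hφ : Differentiable ℝ φ)
    (x : Fin 2 → ℝ) (i : Fin 2) : DifferentiableAt ℝ (fun y => closedLoopField φ y i) x := by
  fin_cases i <;>
    simp only [closedLoopField, Fin.isValue, Fin.zero_eta, Fin.mk_one, cons_val_zero,
      cons_val_one, cons_val_fin_one] <;>
    fun_prop

theorem closedLoopField_add_smul_diag (φ : ℝ → ℝ) (x : Fin 2 → ℝ) (t : ℝ) :
    closedLoopField φ (x + t • ![1, 1]) =
      closedLoopField φ x + ((-1 - x 1) * t - t ^ 2 / 2) • ![1, 1] := by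
  funext i
  fin_cases i <;>
    simp only [closedLoopField, smul_cons, smul_eq_mul, mul_one, smul_empty, Fin.isValue,
      Fin.zero_eta, Fin.mk_one, Pi.add_apply, cons_val_zero, cons_val_one, cons_val_fin_one,
      add_sub_add_right_eq_sub] <;>
    ring

theorem stmt_17_general (φ : ℝ → ℝ) (hφ : ContDiff ℝ 1 φ) :
    ∀ x : Fin 2 → ℝ,
      (jacR (fun x : Fin 2 → ℝ =>
          ![-x 0 - (x 0) ^ 2 / 2 + x 0 * x 1 - (x 1) ^ 2 + φ (x 1 - x 0),
            -x 1 - (x 1) ^ 2 / 2 + φ (x 1 - x 0)]) x).mulVec ![1, 1]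
        = (-1 - x 1) • ![1, 1] := by
  intro x
  refine jacR_mulVec_eq_smul_of_add_smul
    (differentiableAt_closedLoopField_apply (hφ.differentiable one_ne_zero) x)
    (closedLoopField_add_smul_diag φ x) ?_
  simpa using ((hasDerivAt_id' (0 : ℝ)).const_mul (-1 - x 1)).fun_sub
    ((hasDerivAt_pow 2 (0 : ℝ)).div_const 2)

/-- for any `C¹` function `φ` with `φ(0) = 0`, the closed-loop field
`f̃(x) = (−x₁ − x₁²/2 + x₁x₂ − x₂² + φ(x₂−x₁), −x₂ − x₂²/2 + φ(x₂−x₁))` admits the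
nonlinear right eigenpair `λ(x) = −1 − x₂`, `v = (1,1)`. -/
theorem stmt_17 (φ : ℝ → ℝ) (hφ : ContDiff ℝ 1 φ) (hφ0 : φ 0 = 0) :
    ∀ x : Fin 2 → ℝ,
      (jacR (fun x : Fin 2 → ℝ =>
          ![-x 0 - (x 0) ^ 2 / 2 + x 0 * x 1 - (x 1) ^ 2 + φ (x 1 - x 0),
            -x 1 - (x 1) ^ 2 / 2 + φ (x 1 - x 0)]) x).mulVec ![1, 1]
        = (-1 - x 1) • ![1, 1] :=
  stmt_17_general φ hφ
end
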